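/- Let p ≥ 2 and Δ ∈ (0, Δ_max). Assume b(t,·) and σ(t,·) are Lipschitz with constants [b]_Lip and [σ]_Lip (operator norm for σ) and that σ is bounded: ‖σ‖_∞ := sup_{t,x}‖σ(t,x)‖ < ∞. Let ε and ε' be ℝ^q-valued random vectors in L^p with E[ε] = E[ε'] = 0. Then for all x, x' ∈ ℝ^d and every k: E| E_k(x,ε) − E_k(x',ε') |^p ≤ |x−x'|^p e^{C̄Δ} + Δ C̃ · E|ε−ε'|^p, and consequently ‖E_k(x,ε) − E_k(x',ε')‖_p ≤ e^{C̄Δ/p} |x−x'| + (Δ C̃)^{1/p} ‖ε−ε'‖_p, where C̄ = p[b]_Lip + c_p^{(1)} + 2^{p−1} c^{(2)}_{p,Δ_max} [σ]_Lip^p E|ε|^p and C̃ = 2^{p−1} c^{(2)}_{p,Δ_max} ‖σ‖_∞^p. -/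

import Mathlib

open MeasureTheory Real

noncomputable section

abbrev Euc (d : ℕ) : Type := EuclideanSpace ℝ (Fin d)

def c₁ (r : ℝ) : ℝ := 2 ^ (max (r - 3) 0) * ((r - 1) * (r - 2) / 2)

def c₂ (r h₀ : ℝ) : ℝ := 2 ^ (max (r - 3) 0) * (r - 1) * (1 + r / 2 * h₀ ^ (r / 2 - 1))

/-- The Euler operator `E_k(x,ε) = x + Δ b(t_k,x) + √Δ σ(t_k,x) ε`. -/
def euler {d q : ℕ} (Δ : ℝ) (b : ℝ → Euc d → Euc d) (σ : ℝ → Euc d → (Euc q →L[ℝ] Euc d))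
    (tk : ℝ) (x : Euc d) (e : Euc q) : Euc d :=
  x + Δ • b tk x + Real.sqrt Δ • (σ tk x) e

/-!
Write the difference of the two Euler steps as `u + √Δ w` with the drift part
`u = x - x' + Δ (b x - b x')`, for which `‖u‖ ≤ (1 + [b]_Lip Δ) ‖x - x'‖`, and the noise part
`w = σ(x) ε - σ(x') ε'`, which is centred and satisfies
`‖w‖ ≤ [σ]_Lip ‖x - x'‖ ‖ε‖ + ‖σ‖_∞ ‖ε - ε'‖`. For `p ≥ 2` there is the second-order expansion
`‖u + v‖^p ≤ ‖u‖^p + p ‖u‖^(p-2) ⟪u, v⟫ + K (‖u‖^(p-2) ‖v‖² + ‖v‖^p)`, `K = taylorConst p`,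
whose linear term has expectation zero. Young's inequality splits `‖u‖^(p-2) ‖w‖²` into `‖u‖^p`
and `‖w‖^p`, which produces the constants `c₁` and `c₂`, and `1 + aΔ ≤ exp (aΔ)` gives the
exponential. The bound on the `L^p` norm follows by subadditivity of `t ↦ t^(1/p)`.
-/

open Set
open scoped RealInnerProductSpace

def taylorConst (p : ℝ) : ℝ := 2 ^ max (p - 3) 0 * (p * (p - 1) / 2)

lemma one_le_two_rpow_max_sub_three (p : ℝ) : (1 : ℝ) ≤ 2 ^ max (p - 3) 0 :=
  Real.one_le_rpow one_le_two (le_max_right _ _)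

lemma one_le_taylorConst {p : ℝ} (hp : 2 ≤ p) : 1 ≤ taylorConst p := by
  have ha := one_le_two_rpow_max_sub_three p
  have hp' : 1 ≤ p * (p - 1) / 2 := by nlinarith
  unfold taylorConst
  nlinarith [mul_le_mul ha hp' zero_le_one (by positivity)]

lemma sq_le_four_mul_taylorConst {p : ℝ} (hp : 2 ≤ p) : p ^ 2 ≤ 4 * taylorConst p := by
  have ha := one_le_two_rpow_max_sub_three p
  have hp' : 0 ≤ p * (p - 1) / 2 := by nlinarith
  unfold taylorConst
  nlinarith [mul_le_mul_of_nonneg_right ha hp']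

lemma c₁_nonneg {p : ℝ} (hp : 2 ≤ p) : 0 ≤ c₁ p :=
  mul_nonneg (by positivity) (div_nonneg (mul_nonneg (by linarith) (by linarith)) zero_le_two)

lemma c₂_nonneg {p Δmax : ℝ} (hp : 1 ≤ p) (hΔmax : 0 ≤ Δmax) : 0 ≤ c₂ p Δmax :=
  mul_nonneg (mul_nonneg (by positivity) (by linarith)) (by positivity)

lemma add_rpow_le_two_rpow_mul {a b q : ℝ} (ha : 0 ≤ a) (hb : 0 ≤ b) (hq : 0 ≤ q) :
    (a + b) ^ q ≤ 2 ^ max (q - 1) 0 * (a ^ q + b ^ q) := by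
  rcases le_total q 1 with hq1 | hq1
  · rw [max_eq_right (by linarith), Real.rpow_zero, one_mul]
    exact Real.rpow_add_le_add_rpow ha hb hq hq1
  · rw [max_eq_left (by linarith)]
    lift a to NNReal using ha
    lift b to NNReal using hb
    exact_mod_cast NNReal.rpow_add_le_mul_rpow_add_rpow a b hq1

lemma rpow_sub_rpow_le_mul_sub {x y q : ℝ} (hx : 0 ≤ x) (hy : 0 < y) (hq : 1 ≤ q) :
    y ^ q - x ^ q ≤ q * y ^ (q - 1) * (y - x) := by
  have hbern := one_add_mul_self_le_rpow_one_add
    (show -1 ≤ x / y - 1 by linarith [div_nonneg hx hy.le]) hq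
  rw [add_sub_cancel, Real.div_rpow hx hy.le, le_div_iff₀ (by positivity)] at hbern
  have hyq : y ^ q = y ^ (q - 1) * y := by rw [← Real.rpow_add_one hy.ne', sub_add_cancel]
  have : (1 + q * (x / y - 1)) * y ^ q = y ^ q - q * y ^ (q - 1) * (y - x) := by
    rw [hyq]; field_simp; ring
  linarith

lemma le_of_hasDerivAt_of_nonneg {f f' : ℝ → ℝ} {c : ℝ} (hc : 0 ≤ c)
    (hf : ∀ r, HasDerivAt f (f' r) r) (hf' : ∀ r ∈ Ioo 0 c, 0 ≤ f' r) : f 0 ≤ f c :=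
  monotoneOn_of_hasDerivWithinAt_nonneg (convex_Icc 0 c)
    (fun r _ => (hf r).continuousAt.continuousWithinAt) (fun r _ => (hf r).hasDerivWithinAt)
    (by simpa only [interior_Icc] using hf') (left_mem_Icc.2 hc) (right_mem_Icc.2 hc) hc

/-- Both directions `ϵ = ±1` at once: one differentiation in `c` reduces the second-order bound
to the first-order bound `hslope`. -/
lemma rpow_add_mul_le_taylor {p s c ϵ : ℝ} (hp : 2 ≤ p) (hc : 0 ≤ c)
    (hslope : ∀ r ∈ Ioo 0 c, ϵ * ((s + ϵ * r) ^ (p - 1) - s ^ (p - 1))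
      ≤ (p - 1) * 2 ^ max (p - 3) 0 * (s ^ (p - 2) * r + r ^ (p - 1))) :
    (s + ϵ * c) ^ p
      ≤ s ^ p + ϵ * (p * s ^ (p - 1) * c) + taylorConst p * (s ^ (p - 2) * c ^ 2 + c ^ p) := by
  have hp1 : 1 ≤ p := by linarith
  let K := taylorConst p
  have hK : 2 * K = p * (p - 1) * 2 ^ max (p - 3) 0 := by simp only [K, taylorConst]; ring
  have hK0 : 0 ≤ K := zero_le_one.trans (one_le_taylorConst hp)
  have hderiv : ∀ r, HasDerivAt
      (fun r => s ^ p + ϵ * (p * s ^ (p - 1) * r) + K * (s ^ (p - 2) * r ^ 2 + r ^ p)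
        - (s + ϵ * r) ^ p)
      (ϵ * (p * s ^ (p - 1)) + K * (s ^ (p - 2) * (2 * r) + p * r ^ (p - 1))
        - p * (s + ϵ * r) ^ (p - 1) * ϵ) r := by
    intro r
    have hlin : HasDerivAt (fun r => s + ϵ * r) ϵ r := by
      simpa using ((hasDerivAt_id r).const_mul ϵ).const_add s
    refine ((((hasDerivAt_id r).const_mul (p * s ^ (p - 1))).const_mul ϵ).const_add _ |>.add
      ((((hasDerivAt_pow 2 r).const_mul (s ^ (p - 2))).add
        (Real.hasDerivAt_rpow_const (Or.inr hp1))).const_mul K) |>.sub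
      ((Real.hasDerivAt_rpow_const (Or.inr hp1)).comp r hlin)).congr_deriv ?_
    simp only [Nat.cast_ofNat]; ring
  have key := le_of_hasDerivAt_of_nonneg hc hderiv fun r hr => by
    have hr0 : 0 ≤ r ^ (p - 1) := Real.rpow_nonneg hr.1.le _
    have h1 := mul_le_mul_of_nonneg_left (hslope r hr) (by linarith : (0:ℝ) ≤ p)
    have h2 : p * ((p - 1) * 2 ^ max (p - 3) 0 * (s ^ (p - 2) * r + r ^ (p - 1)))
        = 2 * K * (s ^ (p - 2) * r + r ^ (p - 1)) := by rw [hK]; ring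
    nlinarith [mul_nonneg (mul_nonneg (by linarith : (0:ℝ) ≤ p - 2) hK0) hr0]
  simp only [mul_zero, add_zero, zero_pow two_ne_zero, Real.zero_rpow (by linarith : p ≠ 0),
    sub_self] at key
  linarith

lemma add_rpow_le_taylor {p s t : ℝ} (hp : 2 ≤ p) (hs : 0 ≤ s) (ht : 0 ≤ t) :
    (s + t) ^ p ≤ s ^ p + p * s ^ (p - 1) * t + taylorConst p * (s ^ (p - 2) * t ^ 2 + t ^ p) := by
  have key := rpow_add_mul_le_taylor (ϵ := 1) hp ht fun r hr => by
    have hr0 : 0 < r := hr.1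
    have htangent := rpow_sub_rpow_le_mul_sub hs (by linarith : 0 < s + r)
      (by linarith : 1 ≤ p - 1)
    have hsplit := add_rpow_le_two_rpow_mul hs hr0.le (by linarith : 0 ≤ p - 2)
    have hr1 : r ^ (p - 2) * r = r ^ (p - 1) := by
      rw [← Real.rpow_add_one hr0.ne']; ring_nf
    rw [show p - 1 - 1 = p - 2 by ring, add_sub_cancel_left] at htangent
    rw [show p - 2 - 1 = p - 3 by ring] at hsplit
    calc 1 * ((s + 1 * r) ^ (p - 1) - s ^ (p - 1)) ≤ (p - 1) * (s + r) ^ (p - 2) * r := by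
          simpa using htangent
      _ ≤ (p - 1) * (2 ^ max (p - 3) 0 * (s ^ (p - 2) + r ^ (p - 2))) * r := by
          gcongr; linarith
      _ = (p - 1) * 2 ^ max (p - 3) 0 * (s ^ (p - 2) * r + r ^ (p - 1)) := by
          rw [← hr1]; ring
  simpa using key

lemma sub_rpow_le_taylor {p s t : ℝ} (hp : 2 ≤ p) (ht : 0 ≤ t) (hts : t ≤ s) :
    (s - t) ^ p ≤ s ^ p - p * s ^ (p - 1) * t + taylorConst p * (s ^ (p - 2) * t ^ 2 + t ^ p) := by
  have key := rpow_add_mul_le_taylor (ϵ := -1) hp ht fun r hr => by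
    have hr0 : 0 < r := hr.1
    have htangent := rpow_sub_rpow_le_mul_sub (by linarith [hr.2] : 0 ≤ s - r)
      (by linarith [hr.2] : 0 < s) (by linarith : 1 ≤ p - 1)
    rw [show p - 1 - 1 = p - 2 by ring, sub_sub_cancel] at htangent
    have ha := one_le_two_rpow_max_sub_three p
    have hs2 : 0 ≤ (p - 1) * (s ^ (p - 2) * r) :=
      mul_nonneg (by linarith) (mul_nonneg (Real.rpow_nonneg (by linarith [hr.2]) _) hr0.le)
    have hr1 : 0 ≤ (p - 1) * 2 ^ max (p - 3) 0 * r ^ (p - 1) :=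
      mul_nonneg (by nlinarith) (Real.rpow_nonneg hr0.le _)
    calc -1 * ((s + -1 * r) ^ (p - 1) - s ^ (p - 1)) ≤ (p - 1) * (s ^ (p - 2) * r) := by
          rw [show s + -1 * r = s - r by ring]; linarith
      _ ≤ (p - 1) * (s ^ (p - 2) * r) * 2 ^ max (p - 3) 0 := le_mul_of_one_le_right hs2 ha
      _ ≤ (p - 1) * 2 ^ max (p - 3) 0 * (s ^ (p - 2) * r + r ^ (p - 1)) := by linarith
  simpa [← sub_eq_add_neg] using key

lemma abs_add_rpow_le_taylor {p s : ℝ} (hp : 2 ≤ p) (hs : 0 ≤ s) (t : ℝ) :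
    |s + t| ^ p
      ≤ s ^ p + p * s ^ (p - 1) * t + taylorConst p * (s ^ (p - 2) * t ^ 2 + |t| ^ p) := by
  rcases le_total 0 t with ht | ht
  · rw [abs_of_nonneg ht, abs_of_nonneg (by linarith)]
    exact add_rpow_le_taylor hp hs ht
  rcases le_total (-s) t with hst | hst
  · rw [abs_of_nonpos ht, abs_of_nonneg (by linarith), ← sub_neg_eq_add]
    simpa [neg_sq, ← sub_eq_add_neg] using sub_rpow_le_taylor hp (neg_nonneg.2 ht) (by linarith)
  -- for `t ≤ -s` the quadratic part is nonnegative because `p ^ 2 ≤ 4 * taylorConst p`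
  have hquad : 0 ≤ s ^ p + p * s ^ (p - 1) * t + taylorConst p * (s ^ (p - 2) * t ^ 2) := by
    have hs1 : s ^ (p - 1) = s ^ (p - 2) * s := by
      rw [← Real.rpow_add_one' hs (by linarith)]; ring_nf
    have hs2 : s ^ p = s ^ (p - 2) * s ^ 2 := by
      rw [← Real.rpow_natCast, ← Real.rpow_add' hs (by norm_num; linarith)]; push_cast; ring_nf
    have hK := sq_le_four_mul_taylorConst hp
    rw [hs1, hs2]
    have : 0 ≤ s ^ 2 + p * s * t + taylorConst p * t ^ 2 := by
      nlinarith [sq_nonneg (2 * s + p * t), sq_nonneg t]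
    nlinarith [Real.rpow_nonneg hs (p - 2)]
  have habs : |s + t| ^ p ≤ |t| ^ p := by
    refine Real.rpow_le_rpow (abs_nonneg _) ?_ (by linarith)
    rw [abs_of_nonpos ht]
    exact abs_le.2 ⟨by linarith, by linarith⟩
  nlinarith [one_le_taylorConst hp, Real.rpow_nonneg (abs_nonneg t) p]

lemma sq_rpow_half (y p : ℝ) : (y ^ 2) ^ (p / 2) = |y| ^ p := by
  rw [← sq_abs, ← Real.rpow_natCast, ← Real.rpow_mul (abs_nonneg y)]
  congr 1
  ring

lemma mul_rpow_sub_two_mul_sq_le {A B p : ℝ} (hA : 0 ≤ A) (hB : 0 ≤ B) (hp : 2 ≤ p) :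
    p * A ^ (p - 2) * B ^ 2 ≤ (p - 2) / 4 * A ^ p + 2 ^ (p - 1) * B ^ p := by
  have hp0 : 0 < p := by linarith
  have hamgm := Real.geom_mean_le_arith_mean2_weighted (w₁ := (p - 2) / p) (w₂ := 2 / p)
    (p₁ := A ^ p) (p₂ := (2 * B) ^ p) (div_nonneg (by linarith) hp0.le)
    (div_nonneg zero_le_two hp0.le) (Real.rpow_nonneg hA p) (Real.rpow_nonneg (by positivity) p)
    (by rw [← add_div, sub_add_cancel, div_self hp0.ne'])
  rw [← Real.rpow_mul hA, ← Real.rpow_mul (by positivity),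
    show p * ((p - 2) / p) = p - 2 by field_simp, show p * (2 / p) = 2 by field_simp,
    Real.rpow_two, Real.mul_rpow zero_le_two hB] at hamgm
  have h2 : (2 : ℝ) ^ p = 2 * 2 ^ (p - 1) := by
    rw [Real.rpow_sub zero_lt_two, Real.rpow_one]; ring
  calc p * A ^ (p - 2) * B ^ 2 = p / 4 * (A ^ (p - 2) * (2 * B) ^ 2) := by ring
    _ ≤ p / 4 * ((p - 2) / p * A ^ p + 2 / p * (2 ^ p * B ^ p)) := by gcongr
    _ = (p - 2) / 4 * A ^ p + 2 ^ (p - 1) * B ^ p := by rw [h2]; field_simp; ring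

lemma sqrt_rpow_le {Δ Δmax p : ℝ} (hΔ : 0 ≤ Δ) (hΔmax : Δ ≤ Δmax) (hp : 2 ≤ p) :
    √Δ ^ p ≤ Δ * Δmax ^ (p / 2 - 1) := by
  rw [Real.sqrt_eq_rpow, ← Real.rpow_mul hΔ, show 1 / 2 * p = 1 + (p / 2 - 1) by ring,
    Real.rpow_add' hΔ (by linarith), Real.rpow_one]
  gcongr
  linarith

lemma add_le_mul_exp {U D a α β Δ : ℝ} (hD : 0 ≤ D) (ha : 0 ≤ a) (hα : 0 ≤ α) (hβ : 0 ≤ β)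
    (hΔ : 0 ≤ Δ) (hU : U ≤ D * exp (a * Δ)) :
    (1 + α * Δ) * U + Δ * β * D ≤ D * exp ((a + α + β) * Δ) :=
  calc (1 + α * Δ) * U + Δ * β * D
      ≤ (1 + α * Δ) * (D * exp (a * Δ)) + Δ * β * (D * exp (a * Δ)) := by
        gcongr
        exact le_mul_of_one_le_right hD (one_le_exp (by positivity))
    _ = D * exp (a * Δ) * ((α + β) * Δ + 1) := by ring
    _ ≤ D * exp (a * Δ) * exp ((α + β) * Δ) := by gcongr; exact add_one_le_exp _
    _ = D * exp ((a + α + β) * Δ) := by rw [mul_assoc, ← exp_add]; ring_nf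

lemma rpow_one_div_le_of_le_rpow_mul_exp_add {I D K M a p : ℝ} (hp : 1 ≤ p) (hI : 0 ≤ I)
    (hD : 0 ≤ D) (hK : 0 ≤ K) (hM : 0 ≤ M) (h : I ≤ D ^ p * exp a + K * M) :
    I ^ (1 / p) ≤ exp (a / p) * D + K ^ (1 / p) * M ^ (1 / p) := by
  have hp0 : 0 < p := by linarith
  calc I ^ (1 / p) ≤ (D ^ p * exp a + K * M) ^ (1 / p) := by gcongr
    _ ≤ (D ^ p * exp a) ^ (1 / p) + (K * M) ^ (1 / p) :=
        Real.rpow_add_le_add_rpow (by positivity) (by positivity) (by positivity)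
          ((div_le_one hp0).2 hp)
    _ = exp (a / p) * D + K ^ (1 / p) * M ^ (1 / p) := by
        rw [Real.mul_rpow (by positivity) (exp_pos a).le, Real.mul_rpow hK hM,
          ← Real.rpow_mul hD, mul_one_div_cancel hp0.ne', Real.rpow_one, ← exp_mul]
        ring_nf

lemma norm_sub_add_smul_sub_rpow_le {E : Type*} [NormedAddCommGroup E] [NormedSpace ℝ E]
    {B : E → E} {Lb Δ p : ℝ} (hB : ∀ x y, ‖B x - B y‖ ≤ Lb * ‖x - y‖) (hΔ : 0 ≤ Δ) (hp : 0 ≤ p)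
    (x x' : E) : ‖x - x' + Δ • (B x - B x')‖ ^ p ≤ ‖x - x'‖ ^ p * exp (p * Lb * Δ) := by
  have hnorm : ‖x - x' + Δ • (B x - B x')‖ ≤ ‖x - x'‖ * exp (Lb * Δ) :=
    calc ‖x - x' + Δ • (B x - B x')‖ ≤ ‖x - x'‖ + Δ * (Lb * ‖x - x'‖) := by
          grw [norm_add_le, norm_smul, Real.norm_of_nonneg hΔ, hB]
      _ = ‖x - x'‖ * (Lb * Δ + 1) := by ring
      _ ≤ ‖x - x'‖ * exp (Lb * Δ) := by gcongr; exact add_one_le_exp _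
  calc ‖x - x' + Δ • (B x - B x')‖ ^ p ≤ (‖x - x'‖ * exp (Lb * Δ)) ^ p := by gcongr
    _ = ‖x - x'‖ ^ p * exp (p * Lb * Δ) := by
        rw [Real.mul_rpow (norm_nonneg _) (exp_pos _).le, ← exp_mul]; ring_nf

lemma ContinuousLinearMap.norm_apply_sub_apply_le {E F : Type*} [NormedAddCommGroup E]
    [NormedSpace ℝ E] [NormedAddCommGroup F] [NormedSpace ℝ F] (L L' : F →L[ℝ] E) (e e' : F) :
    ‖L e - L' e'‖ ≤ ‖L - L'‖ * ‖e‖ + ‖L'‖ * ‖e - e'‖ := by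
  rw [show L e - L' e' = (L - L') e + L' (e - e') by simp]
  exact (norm_add_le _ _).trans (add_le_add ((L - L').le_opNorm e) (L'.le_opNorm _))

lemma MeasureTheory.MemLp.integrable_norm_rpow_ofReal {Ω F : Type*} [MeasurableSpace Ω]
    {P : Measure Ω} [IsFiniteMeasure P] [NormedAddCommGroup F] {f : Ω → F} {p : ℝ} (hp : 0 ≤ p)
    (hf : MemLp f (ENNReal.ofReal p) P) : Integrable (fun ω => ‖f ω‖ ^ p) P := by
  simpa [ENNReal.toReal_ofReal hp] using hf.integrable_norm_rpow'

section InnerProductSpace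

variable {E : Type*} [NormedAddCommGroup E] [InnerProductSpace ℝ E]

theorem norm_add_rpow_le {p : ℝ} (hp : 2 ≤ p) (u v : E) :
    ‖u + v‖ ^ p ≤ ‖u‖ ^ p + p * ‖u‖ ^ (p - 2) * ⟪u, v⟫
      + taylorConst p * (‖u‖ ^ (p - 2) * ‖v‖ ^ 2 + ‖v‖ ^ p) := by
  set s := ‖u‖
  set t := ‖v‖
  have hs : 0 ≤ s := norm_nonneg u
  have ht : 0 ≤ t := norm_nonneg v
  have hinner : |⟪u, v⟫| ≤ s * t := abs_real_inner_le_norm u v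
  -- `‖u + v‖ ^ 2` is a convex combination of `(s + t) ^ 2` and `(s - t) ^ 2`, so convexity of
  -- `x ↦ x ^ (p / 2)` reduces the claim to the scalar bound at `t` and at `-t`
  obtain ⟨l, hl0, hl1, hβ⟩ : ∃ l : ℝ, 0 ≤ l ∧ l ≤ 1 ∧ ⟪u, v⟫ = (2 * l - 1) * (s * t) := by
    rcases (mul_nonneg hs ht).eq_or_lt with hst | hst
    · refine ⟨1 / 2, by norm_num, by norm_num, ?_⟩
      rw [← hst] at hinner ⊢
      rw [mul_zero]
      exact abs_nonpos_iff.1 hinner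
    · refine ⟨(s * t + ⟪u, v⟫) / (2 * (s * t)), ?_, ?_, ?_⟩
      · exact div_nonneg (by linarith [neg_abs_le ⟪u, v⟫]) (by positivity)
      · rw [div_le_one (by positivity)]; linarith [le_abs_self ⟪u, v⟫]
      · have hs0 : s ≠ 0 := left_ne_zero_of_mul hst.ne'
        have ht0 : t ≠ 0 := right_ne_zero_of_mul hst.ne'
        field_simp
        ring
  have hsq : ‖u + v‖ ^ 2 = l * (s + t) ^ 2 + (1 - l) * (s + -t) ^ 2 := by
    rw [norm_add_sq_real, hβ]; ring
  have hconv : ‖u + v‖ ^ p ≤ l * |s + t| ^ p + (1 - l) * |s + -t| ^ p := by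
    have := (convexOn_rpow (by linarith : 1 ≤ p / 2)).2 (sq_nonneg (s + t)) (sq_nonneg (s + -t))
      hl0 (by linarith : (0:ℝ) ≤ 1 - l) (by ring)
    simp only [smul_eq_mul, sq_rpow_half] at this
    rwa [← abs_norm (u + v), ← sq_rpow_half, hsq]
  have hplus := abs_add_rpow_le_taylor hp hs t
  have hminus := abs_add_rpow_le_taylor hp hs (-t)
  rw [abs_of_nonneg ht] at hplus
  rw [abs_neg, abs_of_nonneg ht, neg_sq] at hminus
  have hs1 : s ^ (p - 1) = s ^ (p - 2) * s := by
    rw [← Real.rpow_add_one' hs (by linarith)]; ring_nf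
  calc ‖u + v‖ ^ p ≤ l * |s + t| ^ p + (1 - l) * |s + -t| ^ p := hconv
    _ ≤ l * (s ^ p + p * s ^ (p - 1) * t + taylorConst p * (s ^ (p - 2) * t ^ 2 + t ^ p))
        + (1 - l) * (s ^ p + p * s ^ (p - 1) * -t
          + taylorConst p * (s ^ (p - 2) * t ^ 2 + t ^ p)) := by gcongr
    _ = _ := by rw [hβ, hs1]; ring

theorem norm_add_rpow_le_of_norm_le_sqrt_mul {p Δ Δmax A₁ A₂ : ℝ} (hp : 2 ≤ p) (hΔ : 0 ≤ Δ)
    (hΔmax : Δ ≤ Δmax) (hA₁ : 0 ≤ A₁) (hA₂ : 0 ≤ A₂) (u : E) {v : E}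
    (hv : ‖v‖ ≤ √Δ * (A₁ + A₂)) :
    ‖u + v‖ ^ p ≤ p * ‖u‖ ^ (p - 2) * ⟪u, v⟫
      + ((1 + c₁ p * Δ) * ‖u‖ ^ p + Δ * (2 ^ (p - 1) * c₂ p Δmax) * (A₁ ^ p + A₂ ^ p)) := by
  set U := ‖u‖
  have hv2 : ‖v‖ ^ 2 ≤ Δ * (2 * A₁ ^ 2 + 2 * A₂ ^ 2) :=
    calc ‖v‖ ^ 2 ≤ (√Δ * (A₁ + A₂)) ^ 2 := by gcongr
      _ = Δ * (A₁ + A₂) ^ 2 := by rw [mul_pow, Real.sq_sqrt hΔ]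
      _ ≤ Δ * (2 * A₁ ^ 2 + 2 * A₂ ^ 2) := by gcongr; nlinarith [sq_nonneg (A₁ - A₂)]
  have hΔmax₀ : 0 ≤ Δmax ^ (p / 2 - 1) := Real.rpow_nonneg (hΔ.trans hΔmax) _
  have hvp : ‖v‖ ^ p ≤ Δ * Δmax ^ (p / 2 - 1) * (2 ^ (p - 1) * (A₁ ^ p + A₂ ^ p)) := by
    have hsplit := add_rpow_le_two_rpow_mul hA₁ hA₂ (by linarith : 0 ≤ p)
    rw [max_eq_left (by linarith)] at hsplit
    calc ‖v‖ ^ p ≤ (√Δ * (A₁ + A₂)) ^ p := by gcongr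
      _ = √Δ ^ p * (A₁ + A₂) ^ p := Real.mul_rpow (Real.sqrt_nonneg Δ) (by positivity)
      _ ≤ Δ * Δmax ^ (p / 2 - 1) * (2 ^ (p - 1) * (A₁ ^ p + A₂ ^ p)) :=
          mul_le_mul (sqrt_rpow_le hΔ hΔmax hp) hsplit (by positivity) (by positivity)
  have hy₁ := mul_rpow_sub_two_mul_sq_le (norm_nonneg u) hA₁ hp
  have hy₂ := mul_rpow_sub_two_mul_sq_le (norm_nonneg u) hA₂ hp
  have ha : 0 ≤ (p - 1) * 2 ^ max (p - 3) 0 := mul_nonneg (by linarith) (by positivity)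
  have hK : 0 ≤ taylorConst p := zero_le_one.trans (one_le_taylorConst hp)
  have hrem : taylorConst p * (U ^ (p - 2) * ‖v‖ ^ 2 + ‖v‖ ^ p)
      ≤ Δ * c₁ p * U ^ p + Δ * (2 ^ (p - 1) * c₂ p Δmax) * (A₁ ^ p + A₂ ^ p) :=
    calc taylorConst p * (U ^ (p - 2) * ‖v‖ ^ 2 + ‖v‖ ^ p)
        ≤ taylorConst p * (U ^ (p - 2) * (Δ * (2 * A₁ ^ 2 + 2 * A₂ ^ 2))
          + Δ * Δmax ^ (p / 2 - 1) * (2 ^ (p - 1) * (A₁ ^ p + A₂ ^ p))) := by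
          gcongr
      _ = Δ * ((p - 1) * 2 ^ max (p - 3) 0) * (p * U ^ (p - 2) * A₁ ^ 2
            + p * U ^ (p - 2) * A₂ ^ 2)
          + Δ * ((p - 1) * 2 ^ max (p - 3) 0) * (p / 2 * Δmax ^ (p / 2 - 1))
            * (2 ^ (p - 1) * (A₁ ^ p + A₂ ^ p)) := by
          unfold taylorConst; ring
      _ ≤ Δ * ((p - 1) * 2 ^ max (p - 3) 0) * (((p - 2) / 4 * U ^ p + 2 ^ (p - 1) * A₁ ^ p)
            + ((p - 2) / 4 * U ^ p + 2 ^ (p - 1) * A₂ ^ p))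
          + Δ * ((p - 1) * 2 ^ max (p - 3) 0) * (p / 2 * Δmax ^ (p / 2 - 1))
            * (2 ^ (p - 1) * (A₁ ^ p + A₂ ^ p)) := by
          gcongr
      _ = Δ * c₁ p * U ^ p + Δ * (2 ^ (p - 1) * c₂ p Δmax) * (A₁ ^ p + A₂ ^ p) := by
          unfold c₁ c₂; ring
  linarith [norm_add_rpow_le hp u v]

variable {F : Type*} [NormedAddCommGroup F] [NormedSpace ℝ F]

theorem norm_add_sqrt_smul_apply_sub_apply_rpow_le {p Δ Δmax Lσ Mσ : ℝ} (hp : 2 ≤ p)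
    (hΔ : 0 ≤ Δ) (hΔmax : Δ ≤ Δmax) (hLσ : 0 ≤ Lσ) {S : E → F →L[ℝ] E}
    (hS : ∀ x y, ‖S x - S y‖ ≤ Lσ * ‖x - y‖) (hM : ∀ x, ‖S x‖ ≤ Mσ) (u x x' : E) (e e' : F) :
    ‖u + √Δ • (S x e - S x' e')‖ ^ p ≤ p * ‖u‖ ^ (p - 2) * ⟪u, √Δ • (S x e - S x' e')⟫
      + ((1 + c₁ p * Δ) * ‖u‖ ^ p
        + (Δ * (2 ^ (p - 1) * c₂ p Δmax) * Lσ ^ p * ‖x - x'‖ ^ p * ‖e‖ ^ p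
          + Δ * (2 ^ (p - 1) * c₂ p Δmax) * Mσ ^ p * ‖e - e'‖ ^ p)) := by
  have hMσ : 0 ≤ Mσ := (norm_nonneg _).trans (hM x)
  have hnoise : ‖√Δ • (S x e - S x' e')‖ ≤ √Δ * (Lσ * ‖x - x'‖ * ‖e‖ + Mσ * ‖e - e'‖) := by
    rw [norm_smul, Real.norm_of_nonneg (Real.sqrt_nonneg Δ)]
    grw [ContinuousLinearMap.norm_apply_sub_apply_le, hS, hM]
  have := norm_add_rpow_le_of_norm_le_sqrt_mul hp hΔ hΔmax (by positivity) (by positivity) u hnoise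
  rw [Real.mul_rpow (by positivity) (norm_nonneg _), Real.mul_rpow hLσ (norm_nonneg _),
    Real.mul_rpow hMσ (norm_nonneg _)] at this
  linarith

end InnerProductSpace

section Integral

variable {Ω E : Type*} [MeasurableSpace Ω] {P : Measure Ω}
  [NormedAddCommGroup E] [InnerProductSpace ℝ E] [CompleteSpace E]

lemma integral_le_integral_of_le_inner_add {f g : Ω → ℝ} {V : Ω → E} (u : E) (c : ℝ)
    (hf : ∀ ω, 0 ≤ f ω) (hV : Integrable V P) (hV0 : ∫ ω, V ω ∂P = 0) (hg : Integrable g P)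
    (hfg : ∀ ω, f ω ≤ c * ⟪u, V ω⟫ + g ω) : ∫ ω, f ω ∂P ≤ ∫ ω, g ω ∂P := by
  have hinner : Integrable (fun ω => c * ⟪u, V ω⟫) P := (hV.const_inner u).const_mul c
  calc ∫ ω, f ω ∂P ≤ ∫ ω, (c * ⟪u, V ω⟫ + g ω) ∂P :=
        integral_mono_of_nonneg (ae_of_all _ hf) (hinner.add hg) (ae_of_all _ hfg)
    _ = ∫ ω, g ω ∂P := by
        rw [integral_add hinner hg, integral_const_mul, integral_inner hV, hV0, inner_zero_right,
          mul_zero, zero_add]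

variable [IsProbabilityMeasure P] {F : Type*} [NormedAddCommGroup F] [NormedSpace ℝ F]
  [CompleteSpace F]

theorem integral_norm_euler_step_sub_rpow_le {p Δ Δmax Lb Lσ Mσ : ℝ} (hp : 2 ≤ p) (hΔ : 0 ≤ Δ)
    (hΔmax : Δ ≤ Δmax) (hLb : 0 ≤ Lb) (hLσ : 0 ≤ Lσ) {B : E → E} {S : E → F →L[ℝ] E}
    (hB : ∀ x y, ‖B x - B y‖ ≤ Lb * ‖x - y‖) (hS : ∀ x y, ‖S x - S y‖ ≤ Lσ * ‖x - y‖)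
    (hM : ∀ x, ‖S x‖ ≤ Mσ) {ε ε' : Ω → F} (hε : Integrable ε P) (hε' : Integrable ε' P)
    (hε0 : ∫ ω, ε ω ∂P = 0) (hε'0 : ∫ ω, ε' ω ∂P = 0) (hεp : MemLp ε (ENNReal.ofReal p) P)
    (hε'p : MemLp ε' (ENNReal.ofReal p) P) (x x' : E) :
    ∫ ω, ‖(x + Δ • B x + √Δ • S x (ε ω)) - (x' + Δ • B x' + √Δ • S x' (ε' ω))‖ ^ p ∂P
      ≤ ‖x - x'‖ ^ p
          * exp ((p * Lb + c₁ p + 2 ^ (p - 1) * c₂ p Δmax * Lσ ^ p * ∫ ω, ‖ε ω‖ ^ p ∂P) * Δ)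
        + Δ * (2 ^ (p - 1) * c₂ p Δmax * Mσ ^ p) * ∫ ω, ‖ε ω - ε' ω‖ ^ p ∂P := by
  set u := x - x' + Δ • (B x - B x')
  set γ := 2 ^ (p - 1) * c₂ p Δmax
  have hSε := (S x).integrable_comp hε
  have hSε' := (S x').integrable_comp hε'
  have hV0 : ∫ ω, √Δ • (S x (ε ω) - S x' (ε' ω)) ∂P = 0 := by
    simp only [integral_smul, integral_sub hSε hSε', (S x).integral_comp_comm hε,
      (S x').integral_comp_comm hε', hε0, hε'0, map_zero, sub_zero, smul_zero]
  have hIε := hεp.integrable_norm_rpow_ofReal (by linarith)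
  have hIεε' : Integrable (fun ω => ‖ε ω - ε' ω‖ ^ p) P :=
    (hεp.sub hε'p).integrable_norm_rpow_ofReal (by linarith)
  have hIrem : Integrable (fun ω =>
      Δ * γ * Lσ ^ p * ‖x - x'‖ ^ p * ‖ε ω‖ ^ p + Δ * γ * Mσ ^ p * ‖ε ω - ε' ω‖ ^ p) P :=
    (hIε.const_mul _).add (hIεε'.const_mul _)
  have hγ : 0 ≤ γ := mul_nonneg (by positivity) (c₂_nonneg (by linarith) (hΔ.trans hΔmax))
  calc ∫ ω, ‖(x + Δ • B x + √Δ • S x (ε ω)) - (x' + Δ • B x' + √Δ • S x' (ε' ω))‖ ^ p ∂P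
      = ∫ ω, ‖u + √Δ • (S x (ε ω) - S x' (ε' ω))‖ ^ p ∂P := by
        congr! 4 with ω; simp only [u, smul_sub]; abel
    _ ≤ ∫ ω, ((1 + c₁ p * Δ) * ‖u‖ ^ p
          + (Δ * γ * Lσ ^ p * ‖x - x'‖ ^ p * ‖ε ω‖ ^ p + Δ * γ * Mσ ^ p * ‖ε ω - ε' ω‖ ^ p)) ∂P :=
        integral_le_integral_of_le_inner_add u _ (fun ω => by positivity)
          ((hSε.sub hSε').smul √Δ) hV0 ((integrable_const _).add hIrem)
          fun ω => norm_add_sqrt_smul_apply_sub_apply_rpow_le hp hΔ hΔmax hLσ hS hM u x x' _ _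
    _ = (1 + c₁ p * Δ) * ‖u‖ ^ p + Δ * (γ * Lσ ^ p * ∫ ω, ‖ε ω‖ ^ p ∂P) * ‖x - x'‖ ^ p
          + Δ * (γ * Mσ ^ p) * ∫ ω, ‖ε ω - ε' ω‖ ^ p ∂P := by
        rw [integral_add (integrable_const _) hIrem,
          integral_add (hIε.const_mul _) (hIεε'.const_mul _), integral_const_mul,
          integral_const_mul, integral_const_mul, integral_const, probReal_univ, one_smul]
        ring
    _ ≤ _ := by
        gcongr
        refine (add_le_mul_exp (by positivity) (by positivity) (c₁_nonneg hp) (by positivity) hΔ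
          (norm_sub_add_smul_sub_rpow_le hB hΔ (by linarith) x x')).trans_eq ?_
        ring_nf

end Integral

theorem euler_two_noise_estimate_general (d q : ℕ) (T Δmax : ℝ) (n : ℕ) (hT : 0 < T)
    (hΔ : T / n < Δmax) (p : ℝ) (hp : 2 ≤ p)
    (b : ℝ → Euc d → Euc d) (σ : ℝ → Euc d → (Euc q →L[ℝ] Euc d)) (Lb Lσ Mσ : ℝ)
    (hLb : 0 ≤ Lb) (hLσ : 0 ≤ Lσ)
    (hb : ∀ t x y, ‖b t x - b t y‖ ≤ Lb * ‖x - y‖)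
    (hσ : ∀ t x y, ‖σ t x - σ t y‖ ≤ Lσ * ‖x - y‖)
    (hMσ : ∀ t x, ‖σ t x‖ ≤ Mσ)
    (Ω : Type*) [MeasurableSpace Ω] (P : Measure Ω) [IsProbabilityMeasure P]
    (ε ε' : Ω → Euc q)
    (hε1 : Integrable ε P) (hε'1 : Integrable ε' P)
    (hε0 : (∫ ω, ε ω ∂P) = 0) (hε'0 : (∫ ω, ε' ω ∂P) = 0)
    (hεp : MemLp ε (ENNReal.ofReal p) P) (hε'p : MemLp ε' (ENNReal.ofReal p) P)
    (x x' : Euc d) (k : ℕ) :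
    (∫ ω, ‖euler (T / n) b σ ((k : ℝ) * (T / n)) x (ε ω)
          - euler (T / n) b σ ((k : ℝ) * (T / n)) x' (ε' ω)‖ ^ p ∂P)
        ≤ ‖x - x'‖ ^ p
            * Real.exp ((p * Lb + c₁ p + 2 ^ (p - 1) * c₂ p Δmax * Lσ ^ p
                * ∫ ω, ‖ε ω‖ ^ p ∂P) * (T / n))
          + (T / n) * (2 ^ (p - 1) * c₂ p Δmax * Mσ ^ p) * ∫ ω, ‖ε ω - ε' ω‖ ^ p ∂P
      ∧ (∫ ω, ‖euler (T / n) b σ ((k : ℝ) * (T / n)) x (ε ω)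
          - euler (T / n) b σ ((k : ℝ) * (T / n)) x' (ε' ω)‖ ^ p ∂P) ^ (1 / p)
        ≤ Real.exp ((p * Lb + c₁ p + 2 ^ (p - 1) * c₂ p Δmax * Lσ ^ p
                * ∫ ω, ‖ε ω‖ ^ p ∂P) * (T / n) / p) * ‖x - x'‖
          + ((T / n) * (2 ^ (p - 1) * c₂ p Δmax * Mσ ^ p)) ^ (1 / p)
            * (∫ ω, ‖ε ω - ε' ω‖ ^ p ∂P) ^ (1 / p) := by
  have hΔ₀ : 0 ≤ T / n := div_nonneg hT.le n.cast_nonneg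
  have hstep := integral_norm_euler_step_sub_rpow_le (P := P) hp hΔ₀ hΔ.le hLb hLσ
    (hb (k * (T / n))) (hσ (k * (T / n))) (hMσ (k * (T / n))) hε1 hε'1 hε0 hε'0 hεp hε'p x x'
  have hnoise : 0 ≤ T / n * (2 ^ (p - 1) * c₂ p Δmax * Mσ ^ p) :=
    mul_nonneg hΔ₀ <| mul_nonneg (mul_nonneg (by positivity) (c₂_nonneg (by linarith)
      (hΔ₀.trans hΔ.le))) (Real.rpow_nonneg ((norm_nonneg _).trans (hMσ 0 x)) _)
  exact ⟨hstep, rpow_one_div_le_of_le_rpow_mul_exp_add (by linarith)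
    (integral_nonneg fun ω => by positivity) (norm_nonneg _) hnoise
    (integral_nonneg fun ω => by positivity) hstep⟩

/-- One-step `L^p` estimate for the Euler operator with two different (centered) noises:
`E|E_k(x,ε) − E_k(x',ε')|^p ≤ |x−x'|^p e^{C̄Δ} + Δ C̃ E|ε−ε'|^p`, and consequently
`‖E_k(x,ε) − E_k(x',ε')‖_p ≤ e^{C̄Δ/p}|x−x'| + (ΔC̃)^{1/p}‖ε−ε'‖_p`, where
`C̄ = p[b]_Lip + c_p^{(1)} + 2^{p−1} c^{(2)}_{p,Δmax} [σ]_Lip^p E|ε|^p` and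
`C̃ = 2^{p−1} c^{(2)}_{p,Δmax} ‖σ‖_∞^p`. -/
theorem euler_two_noise_estimate (d q : ℕ) (T Δmax : ℝ) (n : ℕ) (hn : 0 < n) (hT : 0 < T)
    (hΔmax : 0 < Δmax) (hΔ : T / n < Δmax) (p : ℝ) (hp : 2 ≤ p)
    (b : ℝ → Euc d → Euc d) (σ : ℝ → Euc d → (Euc q →L[ℝ] Euc d)) (Lb Lσ Mσ : ℝ)
    (hLb : 0 ≤ Lb) (hLσ : 0 ≤ Lσ)
    (hb : ∀ t x y, ‖b t x - b t y‖ ≤ Lb * ‖x - y‖)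
    (hσ : ∀ t x y, ‖σ t x - σ t y‖ ≤ Lσ * ‖x - y‖)
    (hMσ : ∀ t x, ‖σ t x‖ ≤ Mσ)
    (Ω : Type*) [MeasurableSpace Ω] (P : Measure Ω) [IsProbabilityMeasure P]
    (ε ε' : Ω → Euc q) (hεm : Measurable ε) (hε'm : Measurable ε')
    (hε1 : Integrable ε P) (hε'1 : Integrable ε' P)
    (hε0 : (∫ ω, ε ω ∂P) = 0) (hε'0 : (∫ ω, ε' ω ∂P) = 0)
    (hεp : MemLp ε (ENNReal.ofReal p) P) (hε'p : MemLp ε' (ENNReal.ofReal p) P)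
    (x x' : Euc d) (k : ℕ) :
    (∫ ω, ‖euler (T / n) b σ ((k : ℝ) * (T / n)) x (ε ω)
          - euler (T / n) b σ ((k : ℝ) * (T / n)) x' (ε' ω)‖ ^ p ∂P)
        ≤ ‖x - x'‖ ^ p
            * Real.exp ((p * Lb + c₁ p + 2 ^ (p - 1) * c₂ p Δmax * Lσ ^ p
                * ∫ ω, ‖ε ω‖ ^ p ∂P) * (T / n))
          + (T / n) * (2 ^ (p - 1) * c₂ p Δmax * Mσ ^ p) * ∫ ω, ‖ε ω - ε' ω‖ ^ p ∂P
      ∧ (∫ ω, ‖euler (T / n) b σ ((k : ℝ) * (T / n)) x (ε ω)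
          - euler (T / n) b σ ((k : ℝ) * (T / n)) x' (ε' ω)‖ ^ p ∂P) ^ (1 / p)
        ≤ Real.exp ((p * Lb + c₁ p + 2 ^ (p - 1) * c₂ p Δmax * Lσ ^ p
                * ∫ ω, ‖ε ω‖ ^ p ∂P) * (T / n) / p) * ‖x - x'‖
          + ((T / n) * (2 ^ (p - 1) * c₂ p Δmax * Mσ ^ p)) ^ (1 / p)
            * (∫ ω, ‖ε ω - ε' ω‖ ^ p ∂P) ^ (1 / p) :=
  euler_two_noise_estimate_general d q T Δmax n hT hΔ p hp b σ Lb Lσ Mσ hLb hLσ hb hσ hMσ Ω P ε ε'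
    hε1 hε'1 hε0 hε'0 hεp hε'p x x' k
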